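/- arXiv:2412.20401 — 2 statements merged into one kernel-verified Lean document; each statement's English description precedes it below -/
import Mathlib

section
/- Let P, Q be regular ω-posets and φ : SP → SQ continuous. Define ←^φ_n = {(q,p) ∈ Q_n × P_n : φ ∩ (q̄_S × p̄_S) ≠ ∅}. Then (←^φ_n) is a thin arrow-sequence with φ = ⋂_n (←^φ_n)_S; moreover for every cap D of Q there exists n with D^{⟨←^φ_n} a cap of P. -/
namespace OP

section OmegaPoset

variable (P : Type*) [PartialOrder P]

/-- The n-th cone of the poset: `cone 0` is the set of maximal elements. -/
def cone : ℕ → Set P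
  | 0 => {p | ∀ q, ¬ p < q}
  | n + 1 => {p | ∀ q, p < q → q ∈ cone n}

/-- The n-th level: atoms (minimal elements) of the n-th cone. -/
def level (n : ℕ) : Set P := {p | p ∈ cone P n ∧ ∀ q, q < p → q ∉ cone P n}

/-- An ω-poset: all levels finite and every element in some cone. -/
def IsOmegaPoset : Prop := (∀ n, (level P n).Finite) ∧ ∀ p : P, ∃ n, p ∈ cone P n

variable {P}

/-- `refines A C` : every element of `A` lies below some element of `C` (`A ≤ C`). -/
def refines (A C : Set P) : Prop := ∀ a ∈ A, ∃ c ∈ C, a ≤ c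

/-- A cap is a subset refined by some level. -/
def IsCap (C : Set P) : Prop := ∃ n, refines (level P n) C

/-- A selector meets every cap. -/
def IsSelector (S : Set P) : Prop := ∀ C : Set P, IsCap C → (S ∩ C).Nonempty

/-- `wedge p q` : `p` and `q` have a common lower bound. -/
def wedge (p q : P) : Prop := ∃ r, r ≤ p ∧ r ≤ q

def wedgeSet (p : P) : Set P := {q | wedge p q}

/-- The adjacency relation `p ⌅ q`. -/
def barwedge (p q : P) : Prop := ∀ C : Set P, IsCap C → ∃ c ∈ C, wedge p c ∧ wedge c q

/-- `p ⊲_C q`. -/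
def starBelowOn (C : Set P) (p q : P) : Prop := ∀ c ∈ C, wedge p c → c ≤ q

/-- The star-below relation `p ⊲ q`. -/
def starBelow (p q : P) : Prop := ∃ n, starBelowOn (level P n) p q

/-- A clique: pairwise adjacent set. -/
def IsClique (X : Set P) : Prop := ∀ p ∈ X, ∀ q ∈ X, barwedge p q

/-- Unbounded subset: meets `C^≥` for every cap `C`. -/
def IsUnbounded (X : Set P) : Prop := ∀ C : Set P, IsCap C → ∃ u ∈ X, ∃ c ∈ C, u ≤ c

variable (P)

/-- Regularity: every level is eventually star-refined by a later level. -/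
def IsRegular : Prop :=
  ∀ m, ∃ n, m < n ∧ ∀ p ∈ level P n, ∃ q ∈ level P m, starBelow p q

/-- The spectrum: minimal selectors. -/
def Spec : Set (Set P) := {S | IsSelector S ∧ ∀ T ⊆ S, IsSelector T → T = S}

def SpecT : Type _ := {S : Set P // S ∈ Spec P}

instance : TopologicalSpace (SpecT P) :=
  TopologicalSpace.generateFrom {U | ∃ p : P, U = {S : SpecT P | p ∈ S.1}}

/-- The clique-spectrum: unbounded maximal cliques. -/
def CliqueSpec : Set (Set P) :=
  {X | IsUnbounded X ∧ IsClique X ∧ ∀ Y : Set P, IsClique Y → X ⊆ Y → Y = X}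

def CliqueSpecT : Type _ := {X : Set P // X ∈ CliqueSpec P}

instance : TopologicalSpace (CliqueSpecT P) :=
  TopologicalSpace.generateFrom {U | ∃ p : P, U = {X : CliqueSpecT P | p ∉ X.1}}

variable {P}

/-- The basic open set `p_S`. -/
def pSOpen (p : P) : Set (SpecT P) := {S | p ∈ S.1}

/-- The closed set `p̄_S = {S : S ⊆ p^∧}`. -/
def pSBar (p : P) : Set (SpecT P) := {S | S.1 ⊆ wedgeSet p}

/-- Prime ω-poset: every basic open set is nonempty. -/
def IsPrimePoset (P : Type*) [PartialOrder P] : Prop := ∀ p : P, (pSOpen p).Nonempty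

end OmegaPoset

end OP

namespace OP

section Refiners

variable {P Q : Type*} [PartialOrder P] [PartialOrder Q]

/-- A refiner: every cap of `Q` is refined through the relation by some cap of `P`. -/
def IsRefinerRel (R : Q → P → Prop) : Prop :=
  ∀ C : Set Q, IsCap C → ∃ B : Set P, IsCap B ∧ ∀ b ∈ B, ∃ c ∈ C, R c b

/-- `∧`-preserving: `⊐ ∘ ∧ ∘ ⊏ ⊆ ∧`. -/
def WedgePres (R : Q → P → Prop) : Prop :=
  ∀ q p p' q', R q p → wedge p p' → R q' p' → wedge q q'

/-- `⌅`-preserving: `⊐ ∘ ⌅ ∘ ⊏ ⊆ ⌅`. -/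
def BarwedgePres (R : Q → P → Prop) : Prop :=
  ∀ q p p' q', R q p → barwedge p p' → R q' p' → barwedge q q'

/-- The star `⊐*` of a relation: `q ⊐* p` iff some cap `C` has `C ∩ p^∧ ⊏ q`. -/
def relStar (R : Q → P → Prop) (q : Q) (p : P) : Prop :=
  ∃ C : Set P, IsCap C ∧ ∀ c ∈ C, wedge p c → R q c

/-- Composition `▷ ∘ ⊐` with the star-above relation on `Q`. -/
def starAboveComp (R : Q → P → Prop) : Q → P → Prop :=
  fun q p => ∃ q', starBelow q' q ∧ R q' p

/-- A strong refiner: a `∧`-preserving refiner with `⊐ = ▷ * ⊐`. -/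
def IsStrongRefiner (R : Q → P → Prop) : Prop :=
  IsRefinerRel R ∧ WedgePres R ∧ ∀ q p, R q p ↔ relStar (starAboveComp R) q p

/-- `φ` is the continuous map associated to `R`, i.e. `φ(S) = S^{⊏ ⊲}`. -/
def specMapOf (R : Q → P → Prop) (φ : SpecT P → SpecT Q) : Prop :=
  ∀ S : SpecT P, (φ S).1 = {r : Q | ∃ p ∈ S.1, ∃ q, R q p ∧ starBelow q r}

/-- The relation `⊒_φ`: `q ⊒_φ p` iff `q̄_S ⊇ φ[p̄_S]`. -/
def relBarPhi (φ : SpecT P → SpecT Q) (q : Q) (p : P) : Prop :=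
  ∀ S : SpecT P, S ∈ pSBar p → φ S ∈ pSBar q

/-- The relation `⊐_φ`: `q ⊐_φ p` iff `q_S ⊇ φ[p̄_S]`. -/
def relPhi (φ : SpecT P → SpecT Q) (q : Q) (p : P) : Prop :=
  ∀ S : SpecT P, S ∈ pSBar p → φ S ∈ pSOpen q

/-- An arrow: a finite relation with `← ∘ ⌅` co-surjective. -/
def IsArrow (A : Q → P → Prop) : Prop :=
  {x : Q × P | A x.1 x.2}.Finite ∧ ∀ p : P, ∃ q p', A q p' ∧ barwedge p' p

/-- `A ≤ B` for relations: `A ⊆ ≤ ∘ B ∘ ≥`. -/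
def arrowLe (A B : Q → P → Prop) : Prop :=
  ∀ q p, A q p → ∃ q' p', q ≤ q' ∧ p ≤ p' ∧ B q' p'

/-- The relation `⟨←` of an arrow: `q ⟨← p` iff `p^{⌅→} ⊲ q`. -/
def angleRel (A : Q → P → Prop) (q : Q) (p : P) : Prop :=
  ∀ q', (∃ p', barwedge p p' ∧ A q' p') → starBelow q' q

/-- The relation `⋂ₙ (←ₙ)̄_S` on spectra determined by a sequence of arrows. -/
def seqGraph (A : ℕ → Q → P → Prop) (T : SpecT Q) (S : SpecT P) : Prop :=
  ∀ n, ∃ q p, A n q p ∧ T.1 ⊆ wedgeSet q ∧ S.1 ⊆ wedgeSet p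

end Refiners

end OP

/-!
Points of the spectrum are minimal selectors: they are upward closed and pairwise `∧`-compatible,
and in a regular ω-poset every member `t` of a point `S` has a witness `v ∈ S` such that
`h̄_S ⊆ t_S` for every deep `h` with `v ∧ h`. Hence a point `S'` that is near `S` at a deep level
(`S ∈ p̄_S`, `S' ∈ p̄'_S` with `p ⌅ p'`) contains any prescribed finite part of `S`, and by
continuity `φ S'` contains any prescribed element of `φ S`. Applied to `S' ∈ φ ∩ (q̄_S × p̄_S)`
this gives `φ = ⋂ₙ (←^φ_n)_S`. If the cap property failed at every level, witnesses `pₙ ∈ Pₙ`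
would produce, by pigeonhole on the finite levels, the selector `{y | pₙ ≤ y infinitely often}`;
a point inside it contradicts the same continuity estimate.
-/

namespace OP

open Filter

section Levels

variable {P : Type*} [PartialOrder P]

theorem mem_cone_succ {p : P} : ∀ {n : ℕ}, p ∈ cone P n → p ∈ cone P (n + 1)
  | 0, h => fun q hq => absurd hq (h q)
  | _ + 1, h => fun q hq => mem_cone_succ (h q hq)

theorem cone_mono : Monotone (cone P) :=
  monotone_nat_of_le_succ fun _ _ => mem_cone_succ

theorem exists_level_le (hP : IsOmegaPoset P) {q : P} {n : ℕ} (hq : q ∈ cone P n) :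
    ∃ p ∈ level P n, p ≤ q := by
  classical
  -- the index of the first cone containing `t` strictly decreases along `<`
  let rank : P → ℕ := fun t => Nat.find (hP.2 t)
  have rank_lt : ∀ {s t : P}, s < t → rank t < rank s := by
    intro s t hst
    have hs : s ∈ cone P (rank s) := Nat.find_spec (hP.2 s)
    rcases hk : rank s with _ | k
    · rw [hk] at hs; exact absurd hst (hs t)
    · rw [hk] at hs; exact Nat.lt_succ_of_le (Nat.find_min' _ (hs t hst))
  obtain ⟨p, ⟨hpn, hpq⟩, hmin⟩ := (measure fun t => n - rank t).wf.has_min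
    {t | t ∈ cone P n ∧ t ≤ q} ⟨q, hq, le_rfl⟩
  refine ⟨p, ⟨hpn, fun t htp htn => hmin t ⟨htn, htp.le.trans hpq⟩ ?_⟩, hpq⟩
  have htn' : rank t ≤ n := Nat.find_min' _ htn
  have := rank_lt htp
  show n - rank t < n - rank p
  omega

theorem exists_level_succ_le {r : P} {n : ℕ} (hr : r ∈ level P (n + 1)) :
    ∃ c ∈ level P n, r ≤ c := by
  obtain ⟨hr, hrmin⟩ := hr
  by_cases hrn : r ∈ cone P n
  · exact ⟨r, ⟨hrn, fun t htr htn => hrmin t htr (mem_cone_succ htn)⟩, le_rfl⟩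
  cases n with
  | zero =>
    obtain ⟨s, hrs⟩ : ∃ s, r < s := by simpa [cone] using hrn
    exact ⟨s, ⟨hr s hrs, fun t hts ht => ht s hts⟩, hrs.le⟩
  | succ m =>
    obtain ⟨s, hrs, hsm⟩ : ∃ s, r < s ∧ s ∉ cone P m := by simpa [cone] using hrn
    exact ⟨s, ⟨hr s hrs, fun t hts ht => hsm (ht s hts)⟩, hrs.le⟩

theorem exists_level_ge {r : P} {k m : ℕ} (hkm : k ≤ m) (hr : r ∈ level P m) :
    ∃ c ∈ level P k, r ≤ c := by
  induction m, hkm using Nat.le_induction generalizing r with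
  | base => exact ⟨r, hr, le_rfl⟩
  | succ m _ ih =>
    obtain ⟨c, hc, hrc⟩ := exists_level_succ_le hr
    obtain ⟨d, hd, hcd⟩ := ih hc
    exact ⟨d, hd, hrc.trans hcd⟩

theorem isCap_level (n : ℕ) : IsCap (level P n) :=
  ⟨n, fun a ha => ⟨a, ha, le_rfl⟩⟩

theorem IsCap.eventually_refines {C : Set P} (hC : IsCap C) :
    ∀ᶠ m in atTop, refines (level P m) C := by
  obtain ⟨n, hn⟩ := hC
  filter_upwards [eventually_ge_atTop n] with m hm a ha
  obtain ⟨b, hb, hab⟩ := exists_level_ge hm ha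
  obtain ⟨c, hc, hbc⟩ := hn b hb
  exact ⟨c, hc, hab.trans hbc⟩

theorem IsCap.exists_finite_subset (hP : IsOmegaPoset P) {C : Set P} (hC : IsCap C) :
    ∃ C' ⊆ C, C'.Finite ∧ IsCap C' := by
  obtain ⟨n, hn⟩ := hC
  choose! g hgC hg using hn
  exact ⟨g '' level P n, Set.image_subset_iff.2 hgC, (hP.1 n).image g,
    n, fun a ha => ⟨g a, Set.mem_image_of_mem g ha, hg a ha⟩⟩

end Levels

section Relations

variable {P : Type*} [PartialOrder P]

theorem wedge_refl (p : P) : wedge p p := ⟨p, le_rfl, le_rfl⟩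

theorem wedge_symm {p q : P} (h : wedge p q) : wedge q p :=
  let ⟨r, hp, hq⟩ := h; ⟨r, hq, hp⟩

theorem wedge_mono {p p' q q' : P} (hp : p ≤ p') (hq : q ≤ q') (h : wedge p q) : wedge p' q' :=
  let ⟨r, hrp, hrq⟩ := h; ⟨r, hrp.trans hp, hrq.trans hq⟩

theorem wedgeSet_mono {p p' : P} (hp : p ≤ p') : wedgeSet p ⊆ wedgeSet p' :=
  fun _ => wedge_mono hp le_rfl

theorem barwedge_mono {p p' q q' : P} (hp : p ≤ p') (hq : q ≤ q') (h : barwedge p q) :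
    barwedge p' q' := fun C hC =>
  let ⟨c, hc, hpc, hcq⟩ := h C hC; ⟨c, hc, wedge_mono hp le_rfl hpc, wedge_mono le_rfl hq hcq⟩

theorem starBelowOn_level_mono {p q : P} {k n : ℕ} (hkn : k ≤ n)
    (h : starBelowOn (level P k) p q) : starBelowOn (level P n) p q := by
  intro c hc hpc
  obtain ⟨c', hc', hcc'⟩ := exists_level_ge hkn hc
  exact hcc'.trans (h c' hc' (wedge_mono le_rfl hcc' hpc))

theorem eventually_starBelowOn {p q : P} (h : starBelow p q) :
    ∀ᶠ n in atTop, starBelowOn (level P n) p q :=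
  let ⟨k, hk⟩ := h; eventually_atTop.2 ⟨k, fun _ hn => starBelowOn_level_mono hn hk⟩

theorem starBelow_of_le_left {p p' q : P} (hp : p ≤ p') (h : starBelow p' q) : starBelow p q :=
  let ⟨n, hn⟩ := h; ⟨n, fun c hc hpc => hn c hc (wedge_mono hp le_rfl hpc)⟩

theorem starBelow_of_le_right {p q q' : P} (hq : q ≤ q') (h : starBelow p q) : starBelow p q' :=
  let ⟨n, hn⟩ := h; ⟨n, fun c hc hpc => (hn c hc hpc).trans hq⟩

theorem wedge_of_barwedge_of_starBelow {p p' w w' : P} (hpp' : barwedge p p')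
    (hpw : starBelow p w) (hp'w' : starBelow p' w') : wedge w w' := by
  obtain ⟨N, hN, hN'⟩ := ((eventually_starBelowOn hpw).and (eventually_starBelowOn hp'w')).exists
  obtain ⟨c, hcN, hpc, hcp'⟩ := hpp' _ (isCap_level N)
  exact ⟨c, hN c hcN hpc, hN' c hcN (wedge_symm hcp')⟩

theorem IsRegular.eventually_starBelow (hreg : IsRegular P) (m : ℕ) :
    ∀ᶠ n in atTop, ∀ p ∈ level P n, ∃ q ∈ level P m, starBelow p q := by
  obtain ⟨n, -, hn⟩ := hreg m
  filter_upwards [eventually_ge_atTop n] with k hk p hp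
  obtain ⟨p', hp', hpp'⟩ := exists_level_ge hk hp
  obtain ⟨q, hq, hp'q⟩ := hn p' hp'
  exact ⟨q, hq, starBelow_of_le_left hpp' hp'q⟩

end Relations

section Selectors

variable {P : Type*} [PartialOrder P]

theorem IsSelector.exists_mem_level {S : Set P} (hS : IsSelector S) (n : ℕ) :
    ∃ v ∈ S, v ∈ level P n :=
  hS _ (isCap_level n)

theorem isSelector_wedgeSet (hP : IsOmegaPoset P) (p : P) : IsSelector (wedgeSet p) := by
  intro C hC
  obtain ⟨k, hk⟩ := hP.2 p
  obtain ⟨m, hmC, hkm⟩ := (hC.eventually_refines.and (eventually_ge_atTop k)).exists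
  obtain ⟨r, hrm, hrp⟩ := exists_level_le hP (cone_mono hkm hk)
  obtain ⟨c, hcC, hrc⟩ := hmC r hrm
  exact ⟨c, ⟨r, hrp, hrc⟩, hcC⟩

theorem barwedge_of_wedge (hP : IsOmegaPoset P) {p q : P} (h : wedge p q) : barwedge p q := by
  obtain ⟨r, hrp, hrq⟩ := h
  intro C hC
  obtain ⟨c, hrc, hcC⟩ := isSelector_wedgeSet hP r C hC
  exact ⟨c, hcC, wedge_mono hrp le_rfl hrc, wedge_mono le_rfl hrq (wedge_symm hrc)⟩

theorem isSelector_setOf_frequently_le (hP : IsOmegaPoset P) {p : ℕ → P}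
    (hp : ∀ n, p n ∈ level P n) : IsSelector {y | ∃ᶠ n in atTop, p n ≤ y} := by
  rintro C ⟨m, hm⟩
  have hev : ∀ᶠ n in atTop, ∃ a ∈ level P m, p n ≤ a :=
    eventually_atTop.2 ⟨m, fun n hn => exists_level_ge hn (hp n)⟩
  obtain ⟨a, ham, ha⟩ := (hP.1 m).frequently_exists.1 hev.frequently
  obtain ⟨c, hcC, hac⟩ := hm a ham
  exact ⟨c, ha.mono fun _ hn => hn.trans hac, hcC⟩

theorem isSelector_sInter (hP : IsOmegaPoset P) {c : Set (Set P)}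
    (hsel : ∀ T ∈ c, IsSelector T) (hchain : IsChain (· ⊆ ·) c) (hne : c.Nonempty) :
    IsSelector (⋂₀ c) := by
  intro C hC
  obtain ⟨C', hC'C, hC'fin, hC'⟩ := hC.exists_finite_subset hP
  by_contra hempty
  have hcover : ↑hC'fin.toFinset ⊆ ⋃ T ∈ c, Tᶜ := by
    intro x hx
    have hxc : x ∉ ⋂₀ c := fun hxc => hempty ⟨x, hxc, hC'C (hC'fin.mem_toFinset.1 hx)⟩
    simpa [Set.mem_sInter] using hxc
  have hdir : DirectedOn (fun T T' : Set P => Tᶜ ⊆ T'ᶜ) c := fun T hT T' hT' =>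
    (hchain.total hT hT').elim (fun h => ⟨T, hT, le_rfl, Set.compl_subset_compl.2 h⟩)
      (fun h => ⟨T', hT', Set.compl_subset_compl.2 h, le_rfl⟩)
  obtain ⟨T, hTc, hT⟩ := hdir.exists_mem_subset_of_finset_subset_biUnion hne hcover
  obtain ⟨x, hxT, hxC'⟩ := hsel T hTc C' hC'
  exact hT (hC'fin.mem_toFinset.2 hxC') hxT

theorem exists_spec_subset (hP : IsOmegaPoset P) {S₀ : Set P} (hS₀ : IsSelector S₀) :
    ∃ S ∈ Spec P, S ⊆ S₀ := by
  obtain ⟨S, hSS₀, hmin⟩ := zorn_superset_nonempty {T : Set P | IsSelector T}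
    (fun c hc hchain hne => ⟨⋂₀ c, isSelector_sInter hP hc hchain hne,
      fun _ hT => Set.sInter_subset_of_mem hT⟩) S₀ hS₀
  exact ⟨S, ⟨hmin.prop, fun T hTS hT => hTS.antisymm (hmin.2 hT hTS)⟩, hSS₀⟩

end Selectors

section Spectrum

variable {P : Type*} [PartialOrder P] {S : Set P}

theorem Spec.exists_isCap_inter_subset (hS : S ∈ Spec P) {s : P} (hs : s ∈ S) :
    ∃ C, IsCap C ∧ S ∩ C ⊆ {s} := by
  by_contra! h
  have hsel : IsSelector (S \ {s}) := fun C hC => by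
    obtain ⟨x, hx, hxs⟩ := Set.not_subset.1 (h C hC)
    exact ⟨x, ⟨hx.1, hxs⟩, hx.2⟩
  have hs' : s ∈ S \ {s} := (hS.2 _ Set.sdiff_subset hsel).symm ▸ hs
  exact hs'.2 rfl

theorem Spec.mem_of_le (hS : S ∈ Spec P) {s u : P} (hs : s ∈ S) (hsu : s ≤ u) : u ∈ S := by
  by_contra hu
  obtain ⟨C, ⟨n, hn⟩, hCs⟩ := Spec.exists_isCap_inter_subset hS hs
  -- replacing `s` by `u` in `C` gives a cap that `S` misses
  have hcap : IsCap ((C \ {s}) ∪ {u}) := ⟨n, fun a ha => by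
    obtain ⟨c, hc, hac⟩ := hn a ha
    by_cases hcs : c = s
    · exact ⟨u, Or.inr rfl, hcs ▸ hac |>.trans hsu⟩
    · exact ⟨c, Or.inl ⟨hc, hcs⟩, hac⟩⟩
  obtain ⟨x, hxS, ⟨hxC, hxs⟩ | rfl⟩ := hS.1 _ hcap
  · exact hxs (hCs ⟨hxS, hxC⟩)
  · exact hu hxS

theorem Spec.wedge_of_mem (hS : S ∈ Spec P) {s t : P} (hs : s ∈ S) (ht : t ∈ S) : wedge s t := by
  obtain ⟨Cs, hCs, hCss⟩ := Spec.exists_isCap_inter_subset hS hs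
  obtain ⟨Ct, hCt, hCtt⟩ := Spec.exists_isCap_inter_subset hS ht
  obtain ⟨m, hms, hmt⟩ := (hCs.eventually_refines.and hCt.eventually_refines).exists
  obtain ⟨v, hvS, hvm⟩ := hS.1.exists_mem_level m
  obtain ⟨a, ha, hva⟩ := hms v hvm
  obtain ⟨b, hb, hvb⟩ := hmt v hvm
  have has : a = s := hCss ⟨Spec.mem_of_le hS hvS hva, ha⟩
  have hbt : b = t := hCtt ⟨Spec.mem_of_le hS hvS hvb, hb⟩
  exact ⟨v, has ▸ hva, hbt ▸ hvb⟩

theorem Spec.subset_wedgeSet (hS : S ∈ Spec P) {q : P} (hq : q ∈ S) : S ⊆ wedgeSet q :=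
  fun _ => Spec.wedge_of_mem hS hq

theorem Spec.mem_of_subset_wedgeSet_of_starBelow (hS : S ∈ Spec P) {u w : P}
    (hu : S ⊆ wedgeSet u) (huw : starBelow u w) : w ∈ S := by
  obtain ⟨K, hK⟩ := huw
  obtain ⟨z, hzS, hzK⟩ := hS.1.exists_mem_level K
  exact Spec.mem_of_le hS hzS (hK z hzK (hu hzS))

theorem Spec.exists_starBelow (hreg : IsRegular P) (hS : S ∈ Spec P) {s : P} (hs : s ∈ S) :
    ∃ v ∈ S, starBelow v s := by
  obtain ⟨C, ⟨m, hm⟩, hCs⟩ := Spec.exists_isCap_inter_subset hS hs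
  obtain ⟨n, -, hn⟩ := hreg m
  obtain ⟨v, hvS, hvn⟩ := hS.1.exists_mem_level n
  obtain ⟨w, hwm, hvw⟩ := hn v hvn
  obtain ⟨c, hcC, hwc⟩ := hm w hwm
  have hwS : w ∈ S :=
    Spec.mem_of_subset_wedgeSet_of_starBelow hS (Spec.subset_wedgeSet hS hvS) hvw
  have hcs : c = s := hCs ⟨Spec.mem_of_le hS hwS hwc, hcC⟩
  exact ⟨v, hvS, starBelow_of_le_right (hcs ▸ hwc) hvw⟩

theorem eventually_starBelow_of_mem_spec (hreg : IsRegular P) {c d : P} {M : ℕ}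
    (hcd : starBelowOn (level P M) c d) :
    ∀ᶠ k in atTop, ∀ T ∈ Spec P, c ∈ T → ∀ q ∈ level P k, T ⊆ wedgeSet q → starBelow q d := by
  filter_upwards [hreg.eventually_starBelow M] with k hk T hT hcT q hq hTq
  obtain ⟨w, hwM, hqw⟩ := hk q hq
  have hwT : w ∈ T := Spec.mem_of_subset_wedgeSet_of_starBelow hT hTq hqw
  exact starBelow_of_le_right (hcd w hwM (Spec.wedge_of_mem hT hcT hwT)) hqw

end Spectrum

section Topology

variable {P Q : Type*} [PartialOrder P] [PartialOrder Q]

def NearAt (n : ℕ) (S S' : SpecT P) : Prop :=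
  ∃ p ∈ level P n, ∃ p' ∈ level P n, S.1 ⊆ wedgeSet p ∧ S'.1 ⊆ wedgeSet p' ∧ barwedge p p'

theorem exists_eventually_pSBar_subset_pSOpen (hreg : IsRegular P) {S : SpecT P} {t : P}
    (ht : t ∈ S.1) :
    ∃ v ∈ S.1, ∀ᶠ K in atTop, ∀ h ∈ level P K, wedge v h → pSBar h ⊆ pSOpen t := by
  obtain ⟨w, hwS, hwt⟩ := Spec.exists_starBelow hreg S.2 ht
  obtain ⟨v, hvS, hvw⟩ := Spec.exists_starBelow hreg S.2 hwS
  refine ⟨v, hvS, ?_⟩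
  filter_upwards [eventually_starBelowOn hvw] with K hK h hh hvh S' hS'h
  exact Spec.mem_of_subset_wedgeSet_of_starBelow S'.2
    (hS'h.trans (wedgeSet_mono (hK h hh hvh))) hwt

theorem eventually_forall_nearAt_mem (hreg : IsRegular P) {S : SpecT P} {y : P}
    (hy : y ∈ S.1) : ∀ᶠ n in atTop, ∀ S', NearAt n S S' → y ∈ S'.1 := by
  obtain ⟨v, hvS, hv⟩ := exists_eventually_pSBar_subset_pSOpen hreg hy
  obtain ⟨u, huS, huv⟩ := Spec.exists_starBelow hreg S.2 hvS
  obtain ⟨L, hvL, huL⟩ := (hv.and (eventually_starBelowOn huv)).exists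
  filter_upwards [hreg.eventually_starBelow L] with n hn S' ⟨p, hp, p', hp', hSp, hS'p', hpp'⟩
  obtain ⟨w, hwL, hpw⟩ := hn p hp
  obtain ⟨w', hw'L, hp'w'⟩ := hn p' hp'
  have hwS : w ∈ S.1 := Spec.mem_of_subset_wedgeSet_of_starBelow S.2 hSp hpw
  have hw'S' : w' ∈ S'.1 := Spec.mem_of_subset_wedgeSet_of_starBelow S'.2 hS'p' hp'w'
  have hwv : w ≤ v := huL w hwL (Spec.wedge_of_mem S.2 huS hwS)
  obtain ⟨c, hcw, hcw'⟩ := wedge_of_barwedge_of_starBelow hpp' hpw hp'w'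
  exact hvL w' hw'L ⟨c, hcw.trans hwv, hcw'⟩ (Spec.subset_wedgeSet S'.2 hw'S')

theorem exists_finite_subset_forall_mem_of_continuous {φ : SpecT P → SpecT Q}
    (hφ : Continuous φ) {S : SpecT P} {c : Q} (hc : c ∈ (φ S).1) :
    ∃ t : Set P, t.Finite ∧ t ⊆ S.1 ∧ ∀ S' : SpecT P, t ⊆ S'.1 → c ∈ (φ S').1 := by
  have hopen : IsOpen (φ ⁻¹' pSOpen c) :=
    hφ.isOpen_preimage _ (TopologicalSpace.GenerateOpen.basic _ ⟨c, rfl⟩)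
  obtain ⟨_, ⟨F, ⟨hF, hFgen⟩, rfl⟩, hSF, hFc⟩ :=
    (TopologicalSpace.isTopologicalBasis_of_subbasis rfl).exists_subset_of_mem_open
      (show S ∈ φ ⁻¹' pSOpen c from hc) hopen
  have : Nonempty P := let ⟨p, _⟩ := S.2.1.exists_mem_level 0; ⟨p⟩
  have hFgen' : ∀ U ∈ F, ∃ p : P, U = {S : SpecT P | p ∈ S.1} := hFgen
  choose! g hg using hFgen'
  refine ⟨g '' F, hF.image g, ?_, fun S' hS' => hFc fun U hU => ?_⟩
  · rintro _ ⟨U, hU, rfl⟩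
    have hSU := hSF U hU
    rw [hg U hU] at hSU
    exact hSU
  · rw [hg U hU]
    exact hS' ⟨U, hU, rfl⟩

theorem eventually_forall_nearAt_mem_map (hreg : IsRegular P) {φ : SpecT P → SpecT Q}
    (hφ : Continuous φ) {S : SpecT P} {c : Q} (hc : c ∈ (φ S).1) :
    ∀ᶠ n in atTop, ∀ S', NearAt n S S' → c ∈ (φ S').1 := by
  obtain ⟨t, htfin, htS, ht⟩ := exists_finite_subset_forall_mem_of_continuous hφ hc
  have hall : ∀ᶠ n in atTop, ∀ y ∈ t, ∀ S', NearAt n S S' → y ∈ S'.1 :=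
    (eventually_all_finite htfin).2 fun y hy => eventually_forall_nearAt_mem hreg (htS hy)
  filter_upwards [hall] with n hn S' hSS'
  exact ht S' fun y hy => hn y hy S' hSS'

end Topology

section CanonicalArrow

variable {P Q : Type*} [PartialOrder P] [PartialOrder Q]

/-- The paper's `←^φ_n`: pairs of level-`n` elements with `φ ∩ (q̄_S × p̄_S) ≠ ∅`. -/
def canonicalArrow (φ : SpecT P → SpecT Q) (n : ℕ) (q : Q) (p : P) : Prop :=
  q ∈ level Q n ∧ p ∈ level P n ∧ ∃ S : SpecT P, S.1 ⊆ wedgeSet p ∧ (φ S).1 ⊆ wedgeSet q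

theorem isArrow_canonicalArrow (hP : IsOmegaPoset P) (hQ : IsOmegaPoset Q)
    (φ : SpecT P → SpecT Q) (n : ℕ) : IsArrow (canonicalArrow φ n) := by
  refine ⟨((hQ.1 n).prod (hP.1 n)).subset fun x hx => ⟨hx.1, hx.2.1⟩, fun p => ?_⟩
  obtain ⟨p', hpp', hp'⟩ := (isSelector_wedgeSet hP p).exists_mem_level n
  obtain ⟨S, hS, hSp'⟩ := exists_spec_subset hP (isSelector_wedgeSet hP p')
  obtain ⟨q, hqφ, hq⟩ := (φ ⟨S, hS⟩).2.1.exists_mem_level n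
  exact ⟨q, p', ⟨hq, hp', ⟨S, hS⟩, hSp',
    Spec.subset_wedgeSet (φ _).2 hqφ⟩, barwedge_of_wedge hP (wedge_symm hpp')⟩

theorem canonicalArrow_succ_le (φ : SpecT P → SpecT Q) (n : ℕ) :
    arrowLe (canonicalArrow φ (n + 1)) (canonicalArrow φ n) := by
  rintro q p ⟨hq, hp, S, hSp, hSq⟩
  obtain ⟨q', hq', hqq'⟩ := exists_level_ge n.le_succ hq
  obtain ⟨p', hp', hpp'⟩ := exists_level_ge n.le_succ hp
  exact ⟨q', p', hqq', hpp', hq', hp', S, hSp.trans (wedgeSet_mono hpp'),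
    hSq.trans (wedgeSet_mono hqq')⟩

theorem forall_canonicalArrow_iff (hP : IsOmegaPoset P) (hregP : IsRegular P)
    (hregQ : IsRegular Q) {φ : SpecT P → SpecT Q} (hφ : Continuous φ) (S : SpecT P)
    (T : SpecT Q) : (∀ n, ∃ q p, canonicalArrow φ n q p ∧ q ∈ T.1 ∧ p ∈ S.1) ↔ T = φ S := by
  constructor
  · intro h
    suffices hsub : (φ S).1 ⊆ T.1 from Subtype.ext (T.2.2 _ hsub (φ S).2.1).symm
    intro c hc
    obtain ⟨v, hvφ, hv⟩ := exists_eventually_pSBar_subset_pSOpen hregQ hc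
    obtain ⟨n, hvn, hnear⟩ := (hv.and (eventually_forall_nearAt_mem_map hregP hφ hvφ)).exists
    obtain ⟨q, p, ⟨hq, hp, S', hS'p, hS'q⟩, hqT, hpS⟩ := h n
    have hvS' : v ∈ (φ S').1 := hnear S'
      ⟨p, hp, p, hp, Spec.subset_wedgeSet S.2 hpS, hS'p, barwedge_of_wedge hP (wedge_refl p)⟩
    exact hvn q hq (wedge_symm (hS'q hvS')) (Spec.subset_wedgeSet T.2 hqT)
  · rintro rfl n
    obtain ⟨p, hpS, hp⟩ := S.2.1.exists_mem_level n
    obtain ⟨q, hqT, hq⟩ := (φ S).2.1.exists_mem_level n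
    exact ⟨q, p, ⟨hq, hp, S, Spec.subset_wedgeSet S.2 hpS, Spec.subset_wedgeSet (φ S).2 hqT⟩,
      hqT, hpS⟩

theorem exists_isCap_angleRel_canonicalArrow (hP : IsOmegaPoset P) (hregP : IsRegular P)
    (hregQ : IsRegular Q) {φ : SpecT P → SpecT Q} (hφ : Continuous φ) {D : Set Q}
    (hD : IsCap D) : ∃ n, IsCap {p : P | ∃ d ∈ D, angleRel (canonicalArrow φ n) d p} := by
  suffices h : ∃ n, ∀ p ∈ level P n, ∃ d ∈ D, angleRel (canonicalArrow φ n) d p from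
    let ⟨n, hn⟩ := h; ⟨n, n, fun p hp => ⟨p, hn p hp, le_rfl⟩⟩
  by_contra! h
  choose p hp hpD using h
  obtain ⟨S, hS, hSp⟩ := exists_spec_subset hP (isSelector_setOf_frequently_le hP hp)
  let x : SpecT P := ⟨S, hS⟩
  obtain ⟨m, hm⟩ := hD
  obtain ⟨c₀, hc₀, hc₀m⟩ := (φ x).2.1.exists_mem_level m
  obtain ⟨d, hdD, hc₀d⟩ := hm c₀ hc₀m
  obtain ⟨c, hc, hcc₀⟩ := Spec.exists_starBelow hregQ (φ x).2 hc₀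
  obtain ⟨M, hcd⟩ := starBelow_of_le_right hc₀d hcc₀
  obtain ⟨k, hk⟩ := (eventually_forall_nearAt_mem_map hregP hφ hc).exists
  obtain ⟨y, hyS, hyk⟩ := hS.1.exists_mem_level k
  obtain ⟨n, hpy, hkn, hnd⟩ := ((hSp hyS).and_eventually
    ((eventually_ge_atTop k).and (eventually_starBelow_of_mem_spec hregQ hcd))).exists
  refine hpD n d hdD fun q ⟨p', hpp', hq, hp', S', hS'p', hS'q⟩ => ?_
  obtain ⟨p'', hp'', hp'p''⟩ := exists_level_ge hkn hp'
  have hcS' : c ∈ (φ S').1 := hk S' ⟨y, hyk, p'', hp'', Spec.subset_wedgeSet hS hyS,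
    hS'p'.trans (wedgeSet_mono hp'p''), barwedge_mono hpy hp'p'' hpp'⟩
  exact hnd _ (φ S').2 hcS' q hq hS'q

end CanonicalArrow

end OP

open OP in
/-- The canonical arrow-sequence `←^φ_n` of a continuous map `φ` is a thin
arrow-sequence with `φ = ⋂ₙ (←^φ_n)_S`, and for every cap `D` of `Q` there is `n`
with `D^{⟨←^φ_n}` a cap of `P`. -/
theorem stmt11 {P Q : Type*} [PartialOrder P] [PartialOrder Q]
    (hP : IsOmegaPoset P) (hregP : IsRegular P) (hQ : IsOmegaPoset Q) (hregQ : IsRegular Q)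
    (φ : SpecT P → SpecT Q) (hφ : Continuous φ) :
    (∀ n, IsArrow (fun (q : Q) (p : P) => q ∈ level Q n ∧ p ∈ level P n ∧
        ∃ S : SpecT P, S.1 ⊆ wedgeSet p ∧ (φ S).1 ⊆ wedgeSet q)) ∧
    (∀ n, arrowLe
        (fun (q : Q) (p : P) => q ∈ level Q (n + 1) ∧ p ∈ level P (n + 1) ∧
          ∃ S : SpecT P, S.1 ⊆ wedgeSet p ∧ (φ S).1 ⊆ wedgeSet q)
        (fun (q : Q) (p : P) => q ∈ level Q n ∧ p ∈ level P n ∧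
          ∃ S : SpecT P, S.1 ⊆ wedgeSet p ∧ (φ S).1 ⊆ wedgeSet q)) ∧
    IsRefinerRel (fun (q : Q) (p : P) => ∃ n,
      angleRel (fun (q' : Q) (p' : P) => q' ∈ level Q n ∧ p' ∈ level P n ∧
        ∃ S : SpecT P, S.1 ⊆ wedgeSet p' ∧ (φ S).1 ⊆ wedgeSet q') q p) ∧
    (∀ (S : SpecT P) (T : SpecT Q),
      (∀ n, ∃ q p, (q ∈ level Q n ∧ p ∈ level P n ∧
          ∃ S' : SpecT P, S'.1 ⊆ wedgeSet p ∧ (φ S').1 ⊆ wedgeSet q) ∧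
        q ∈ T.1 ∧ p ∈ S.1) ↔ T = φ S) ∧
    ∀ D : Set Q, IsCap D → ∃ n, IsCap {p : P | ∃ d ∈ D,
      angleRel (fun (q' : Q) (p' : P) => q' ∈ level Q n ∧ p' ∈ level P n ∧
        ∃ S : SpecT P, S.1 ⊆ wedgeSet p' ∧ (φ S).1 ⊆ wedgeSet q') d p} := by
  have hcap := fun D (hD : IsCap D) => exists_isCap_angleRel_canonicalArrow hP hregP hregQ hφ hD
  refine ⟨isArrow_canonicalArrow hP hQ φ, canonicalArrow_succ_le φ, fun C hC => ?_,
    forall_canonicalArrow_iff hP hregP hregQ hφ, hcap⟩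
  obtain ⟨n, hn⟩ := hcap C hC
  exact ⟨_, hn, fun _ ⟨d, hd, hdp⟩ => ⟨d, hd, n, hdp⟩⟩
end

section
/- Every prime morphism in the category F of edge-preserving surjective functions between finite paths is either simple (the domain has exactly one more edge than the codomain), a hook (edge-injective with exactly one turn), or a proper snake (proper edge-injective with exactly two turns). -/
namespace PathCat

/-- The edge relation on the standard path `P_n` with vertices `Fin (n+1)`:
`i ⊓ j` iff `|i − j| ≤ 1` (reflexive and symmetric). -/
def AdjF {n : ℕ} (i j : Fin (n + 1)) : Prop := (i : ℕ) ≤ (j : ℕ) + 1 ∧ (j : ℕ) ≤ (i : ℕ) + 1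

/-- Edge-preserving relation (as a subset of codomain × domain):
`⊐ ∘ ⊓ ∘ ⊏ ⊆ ⊓`. -/
def EdgePresRel {m n : ℕ} (R : Fin (n + 1) → Fin (m + 1) → Prop) : Prop :=
  ∀ i j k l, R i k → AdjF k l → R j l → AdjF i j

/-- Co-surjective: every element of the domain is related to something. -/
def CoSurjRel {m n : ℕ} (R : Fin (n + 1) → Fin (m + 1) → Prop) : Prop := ∀ k, ∃ i, R i k

/-- Co-injective: every element of the codomain is the sole image of some element. -/
def CoInjRel {m n : ℕ} (R : Fin (n + 1) → Fin (m + 1) → Prop) : Prop :=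
  ∀ i, ∃ k, ∀ i', R i' k ↔ i' = i

/-- A morphism of the path category `P`: an edge-preserving co-bijective relation
from `P_m` to `P_n` (subset of `P_n × P_m`). -/
def IsMorRel {m n : ℕ} (R : Fin (n + 1) → Fin (m + 1) → Prop) : Prop :=
  EdgePresRel R ∧ CoSurjRel R ∧ CoInjRel R

/-- Relational composition. -/
def compRel {m n l : ℕ} (S : Fin (l + 1) → Fin (n + 1) → Prop)
    (R : Fin (n + 1) → Fin (m + 1) → Prop) : Fin (l + 1) → Fin (m + 1) → Prop :=
  fun a c => ∃ b, S a b ∧ R b c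

/-- Isomorphism in the path category. -/
def IsIsoRel {m n : ℕ} (R : Fin (n + 1) → Fin (m + 1) → Prop) : Prop :=
  IsMorRel R ∧ ∃ S : Fin (m + 1) → Fin (n + 1) → Prop, IsMorRel S ∧
    (∀ a c, compRel R S a c ↔ a = c) ∧ (∀ a c, compRel S R a c ↔ a = c)

/-- Prime morphism: not an isomorphism, but any factorization into two morphisms
forces one factor to be an isomorphism. -/
def IsPrimeRel {m n : ℕ} (R : Fin (n + 1) → Fin (m + 1) → Prop) : Prop :=
  IsMorRel R ∧ ¬ IsIsoRel R ∧
    ∀ (k : ℕ) (S : Fin (n + 1) → Fin (k + 1) → Prop) (T : Fin (k + 1) → Fin (m + 1) → Prop),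
      IsMorRel S → IsMorRel T → (∀ a c, R a c ↔ compRel S T a c) → IsIsoRel S ∨ IsIsoRel T

/-- Edge-injective morphism: on every edge of the domain, the relation restricts to
an injective function with distinct singleton images. -/
def EdgeInjRel {m n : ℕ} (R : Fin (n + 1) → Fin (m + 1) → Prop) : Prop :=
  ∀ k l : Fin (m + 1), AdjF k l → k ≠ l →
    ∃ i j, i ≠ j ∧ (∀ i', R i' k ↔ i' = i) ∧ (∀ j', R j' l ↔ j' = j)

/-- Morphisms of the category `F`: edge-preserving surjective functions. -/
def IsMorF {m n : ℕ} (f : Fin (m + 1) → Fin (n + 1)) : Prop :=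
  Function.Surjective f ∧ ∀ a b, AdjF a b → AdjF (f a) (f b)

/-- Isomorphism in `F`. -/
def IsIsoF {m n : ℕ} (f : Fin (m + 1) → Fin (n + 1)) : Prop :=
  IsMorF f ∧ ∃ g : Fin (n + 1) → Fin (m + 1), IsMorF g ∧
    (∀ a, g (f a) = a) ∧ ∀ b, f (g b) = b

/-- Prime morphism in `F`. -/
def IsPrimeF {m n : ℕ} (f : Fin (m + 1) → Fin (n + 1)) : Prop :=
  IsMorF f ∧ ¬ IsIsoF f ∧
    ∀ (k : ℕ) (g : Fin (k + 1) → Fin (n + 1)) (h : Fin (m + 1) → Fin (k + 1)),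
      IsMorF g → IsMorF h → (∀ a, f a = g (h a)) → IsIsoF g ∨ IsIsoF h

/-- An edge-injective morphism of paths: an edge-preserving surjective function
mapping each edge of the domain onto an edge of the codomain. -/
def IsEdgeInjFun {m n : ℕ} (f : Fin (m + 1) → Fin (n + 1)) : Prop :=
  Function.Surjective f ∧ (∀ a b : Fin (m + 1), AdjF a b → AdjF (f a) (f b)) ∧
    ∀ a b : Fin (m + 1), (a : ℕ) + 1 = (b : ℕ) → f a ≠ f b

/-- The turning number: the number of length-two subpaths mapped onto an edge. -/
noncomputable def turningNumber {m n : ℕ} (f : Fin (m + 1) → Fin (n + 1)) : ℕ :=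
  Set.ncard {b : Fin (m + 1) | ∃ a c : Fin (m + 1),
    (a : ℕ) + 1 = (b : ℕ) ∧ (b : ℕ) + 1 = (c : ℕ) ∧ f a = f c}

/-- Proper function: no restriction to a proper subpath is still surjective. -/
def ProperFun {m n : ℕ} (f : Fin (m + 1) → Fin (n + 1)) : Prop :=
  ∀ a b : Fin (m + 1), a ≤ b → (∀ j, ∃ k, a ≤ k ∧ k ≤ b ∧ f k = j) →
    ((a : ℕ) = 0 ∧ (b : ℕ) = m)

/-- Composite of a chain of morphisms `F i : P_{d i} → P_{d (i+1)}`. -/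
def chainComp (d : ℕ → ℕ) (F : ∀ i : ℕ, Fin (d (i + 1) + 1) → Fin (d i + 1) → Prop) :
    ∀ k : ℕ, Fin (d k + 1) → Fin (d 0 + 1) → Prop
  | 0 => fun a c => a = c
  | k + 1 => fun a c => ∃ b, F k a b ∧ chainComp d F k b c

end PathCat

/-!
Work with the walk `x ↦ f x` in `ℕ`. If a prime `f` collapses an edge, it factors through the
simple map contracting that edge; that map is not injective, so the other factor is an
isomorphism and `m = n + 1`. Otherwise every step of the walk is `±1`, and
without turns `f` is an isomorphism.

Suppose `f` has at least two turns. If it reaches its top value `n` at an interior point `s`,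
reflect the walk after `s` about `n`: this lifts `f` through a tent map onto a path strictly
longer than `P_n`, while the lift still turns at the second turn and so is not injective. This
contradicts primality; reversing the codomain does the same for the value `0`, so `f` is proper.
If `f` has three or more turns, with `f 0 = 0` say, lift it in the same way through the Z-shaped
map that climbs to a peak, descends to the lowest later valley and climbs again; the third turn
survives in the lift. Hence `f` is a proper snake.
-/

namespace PathCat

open Function

section Walks

def IsWalk (u : ℕ → ℕ) : Prop := ∀ x, u (x + 1) ≤ u x + 1 ∧ u x ≤ u (x + 1) + 1

def IsTurn (m : ℕ) (u : ℕ → ℕ) (p : ℕ) : Prop := 0 < p ∧ p < m ∧ u (p - 1) = u (p + 1)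

variable {u v : ℕ → ℕ}

theorem IsWalk.add_const (hu : IsWalk u) (c : ℕ) : IsWalk (fun x => u x + c) :=
  fun x => by have := hu x; dsimp only; omega

theorem IsWalk.sub_const (hu : IsWalk u) (c : ℕ) : IsWalk (fun x => u x - c) :=
  fun x => by have := hu x; dsimp only; omega

theorem IsWalk.const_sub (hu : IsWalk u) (c : ℕ) : IsWalk (fun x => c - u x) :=
  fun x => by have := hu x; dsimp only; omega

theorem IsWalk.ite_le (hu : IsWalk u) (hv : IsWalk v) {s : ℕ} (hs : u s = v s) :
    IsWalk (fun x => if x ≤ s then u x else v x) := fun x => by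
  rcases lt_trichotomy x s with h | rfl | h
  · simpa [h.le, show x + 1 ≤ s by omega] using hu x
  · simpa [hs] using hv x
  · simpa [show ¬x ≤ s by omega, show ¬x + 1 ≤ s by omega] using hv x

theorem IsWalk.adj (hu : IsWalk u) {a b : ℕ} (h₁ : a ≤ b + 1) (h₂ : b ≤ a + 1) :
    u a ≤ u b + 1 ∧ u b ≤ u a + 1 := by
  rcases (by omega : a = b ∨ a + 1 = b ∨ b + 1 = a) with rfl | rfl | rfl
  · omega
  · exact ⟨(hu a).2, (hu a).1⟩
  · exact hu b

theorem IsWalk.exists_eq_of_le (hu : IsWalk u) {a b v : ℕ} (hab : a ≤ b)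
    (hv : min (u a) (u b) ≤ v ∧ v ≤ max (u a) (u b)) :
    ∃ x, a ≤ x ∧ x ≤ b ∧ u x = v := by
  induction b, hab using Nat.le_induction with
  | base => exact ⟨a, le_rfl, le_rfl, by omega⟩
  | succ b hab ih =>
    by_cases hb : min (u a) (u b) ≤ v ∧ v ≤ max (u a) (u b)
    · obtain ⟨x, hax, hxb, hx⟩ := ih hb
      exact ⟨x, hax, hxb.trans b.le_succ, hx⟩
    · have := hu b
      exact ⟨b + 1, by omega, le_rfl, by omega⟩

theorem IsWalk.exists_eq_of_eq_zero (hu : IsWalk u) {a b k : ℕ} (ha : u a = 0) (hb : u b = k)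
    {j : ℕ} (hj : j ≤ k) : ∃ x ≤ max a b, u x = j := by
  rcases le_total a b with hab | hba
  · obtain ⟨x, -, hx, rfl⟩ := hu.exists_eq_of_le hab (v := j) (by omega)
    exact ⟨x, hx.trans (le_max_right a b), rfl⟩
  · obtain ⟨x, -, hx, rfl⟩ := hu.exists_eq_of_le hba (v := j) (by omega)
    exact ⟨x, hx.trans (le_max_left a b), rfl⟩

theorem IsWalk.forall_up_or_forall_down {m : ℕ} (hu : IsWalk u)
    (hne : ∀ x < m, u (x + 1) ≠ u x) (hturn : ∀ p, ¬IsTurn m u p) :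
    (∀ x < m, u (x + 1) = u x + 1) ∨ (∀ x < m, u x = u (x + 1) + 1) := by
  have hsame : ∀ x < m, (u (x + 1) = u x + 1 ↔ u 1 = u 0 + 1) := by
    intro x hx
    induction x with
    | zero => rfl
    | succ x ih =>
      have := hu x; have := hu (x + 1); have := hne x (by omega); have := hne (x + 1) hx
      have := hturn (x + 1)
      simp only [IsTurn, Nat.add_sub_cancel] at this
      rw [← ih (by omega)]
      omega
  by_cases h : u 1 = u 0 + 1
  · exact Or.inl fun x hx => (hsame x hx).2 h
  · refine Or.inr fun x hx => ?_
    have := (hsame x hx).not.2 h; have := hu x; have := hne x hx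
    omega

theorem exists_peak_valley {m : ℕ} (hdesc : ∃ x < m, u (x + 1) < u x) :
    ∃ xa xb, xa < xb ∧ xb ≤ m ∧ (∀ x ≤ xb, u x ≤ u xa) ∧
      (∀ x, xa ≤ x → x ≤ m → u xb ≤ u x) ∧ u xb < u xa := by
  -- `u` increases up to its first descent `P`, so a maximum on `[P, xb]` is one on `[0, xb]`.
  obtain ⟨hPm, hPdesc⟩ := Nat.find_spec hdesc
  set P := Nat.find hdesc
  have hmono : ∀ y ≤ P, ∀ x ≤ y, u x ≤ u y := by
    intro y hy
    induction y with
    | zero => intro x hx; rw [Nat.le_zero.1 hx]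
    | succ y ih =>
      intro x hx
      have hstep : u y ≤ u (y + 1) := by
        have := Nat.find_min hdesc (show y < P by omega)
        simp only [not_and, not_lt] at this
        exact this (by omega)
      rcases hx.eq_or_lt with rfl | hx
      · rfl
      · exact (ih (by omega) x (by omega)).trans hstep
  obtain ⟨xb, hxb, hB⟩ := (Finset.Icc P m).exists_min_image u ⟨P, by simp; omega⟩
  obtain ⟨xa, hxa, hA⟩ :=
    (Finset.Icc P xb).exists_max_image u ⟨P, by simp at hxb ⊢; omega⟩
  simp only [Finset.mem_Icc] at hxa hxb hA hB
  have hBA : u xb < u xa :=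
    (hB (P + 1) ⟨by omega, by omega⟩).trans_lt (hPdesc.trans_le (hA P ⟨le_rfl, hxb.1⟩))
  refine ⟨xa, xb, hxa.2.lt_of_ne ?_, hxb.2, fun x hx => ?_,
    fun x hx hxm => hB x ⟨by omega, hxm⟩, hBA⟩
  · rintro rfl
    exact lt_irrefl _ hBA
  · rcases le_total x P with h | h
    · exact (hmono P le_rfl x h).trans (hA P ⟨le_rfl, hxb.1⟩)
    · exact hA x ⟨h, hx⟩

end Walks

section Morphisms

variable {m n k l : ℕ} {f : Fin (m + 1) → Fin (n + 1)}

/-- The walk traced by `f`, extended constantly beyond `m`. -/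
def walkOf (f : Fin (m + 1) → Fin (n + 1)) (x : ℕ) : ℕ := f (Fin.clamp x m)

def ofWalk (m n : ℕ) (u : ℕ → ℕ) (x : Fin (m + 1)) : Fin (n + 1) := Fin.clamp (u x) n

/-- `turningNumber f` is the cardinality of this set. -/
def turnSet (f : Fin (m + 1) → Fin (n + 1)) : Set (Fin (m + 1)) :=
  {b | ∃ a c : Fin (m + 1), (a : ℕ) + 1 = b ∧ (b : ℕ) + 1 = c ∧ f a = f c}

theorem walkOf_val (a : Fin (m + 1)) : walkOf f a = f a := by
  rw [walkOf, show Fin.clamp a m = a from Fin.ext (by simp [a.is_le])]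

theorem walkOf_le (x : ℕ) : walkOf f x ≤ n := (f _).is_le

theorem IsMorF.isWalk (hf : IsMorF f) : IsWalk (walkOf f) := fun x => by
  have := hf.2 (Fin.clamp x m) (Fin.clamp (x + 1) m) ⟨by simp; omega, by simp; omega⟩
  exact ⟨this.2, this.1⟩

theorem IsMorF.exists_walkOf_eq (hf : IsMorF f) {j : ℕ} (hj : j ≤ n) :
    ∃ x ≤ m, walkOf f x = j := by
  obtain ⟨a, ha⟩ := hf.1 ⟨j, by omega⟩
  exact ⟨a, a.is_le, by rw [walkOf_val, ha]⟩

theorem isMorF_ofWalk {u : ℕ → ℕ} (hu : IsWalk u)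
    (hsurj : ∀ j ≤ n, ∃ x ≤ m, u x = j) : IsMorF (ofWalk m n u) := by
  refine ⟨fun j => ?_, fun a b hab => ?_⟩
  · obtain ⟨x, hx, hxj⟩ := hsurj j j.is_le
    exact ⟨⟨x, by omega⟩, Fin.ext (by simp [ofWalk, hxj, j.is_le])⟩
  · have := hu.adj hab.1 hab.2
    exact ⟨by simp [ofWalk]; omega, by simp [ofWalk]; omega⟩

theorem mem_turnSet_iff {p : Fin (m + 1)} : p ∈ turnSet f ↔ IsTurn m (walkOf f) p := by
  constructor
  · rintro ⟨a, c, hap, hpc, hac⟩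
    refine ⟨by omega, by omega, ?_⟩
    rw [show (p : ℕ) - 1 = a by omega, hpc, walkOf_val, walkOf_val, hac]
  · rintro ⟨hp0, hpm, hturn⟩
    refine ⟨⟨p - 1, by omega⟩, ⟨p + 1, by omega⟩, by simp; omega, rfl, Fin.ext ?_⟩
    simpa only [← walkOf_val] using hturn

theorem IsMorF.comp {g : Fin (k + 1) → Fin (n + 1)} {h : Fin (m + 1) → Fin (k + 1)}
    (hg : IsMorF g) (hh : IsMorF h) : IsMorF (g ∘ h) :=
  ⟨hg.1.comp hh.1, fun a b hab => hg.2 _ _ (hh.2 a b hab)⟩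

theorem IsIsoF.comp {g : Fin (k + 1) → Fin (n + 1)} {h : Fin (m + 1) → Fin (k + 1)}
    (hg : IsIsoF g) (hh : IsIsoF h) : IsIsoF (g ∘ h) := by
  obtain ⟨hg, g', hg', hgl, hgr⟩ := hg
  obtain ⟨hh, h', hh', hhl, hhr⟩ := hh
  exact ⟨hg.comp hh, h' ∘ g', hh'.comp hg', fun a => by simp [hgl, hhl],
    fun b => by simp [hgr, hhr]⟩

theorem IsIsoF.card_eq {e : Fin (k + 1) → Fin (l + 1)} (he : IsIsoF e) : k = l := by
  obtain ⟨-, e', -, hl, hr⟩ := he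
  simpa using Fintype.card_congr (Equiv.mk e e' hl hr)

theorem IsIsoF.injective {e : Fin (k + 1) → Fin (l + 1)} (he : IsIsoF e) : Injective e := by
  obtain ⟨-, e', -, hl, -⟩ := he
  exact LeftInverse.injective (g := e') hl

theorem isIsoF_rev : IsIsoF (Fin.rev : Fin (n + 1) → Fin (n + 1)) := by
  have hrev : IsMorF (Fin.rev : Fin (n + 1) → Fin (n + 1)) :=
    ⟨Fin.rev_surjective, fun a b hab => by simp only [AdjF, Fin.val_rev] at hab ⊢; omega⟩
  exact ⟨hrev, Fin.rev, hrev, Fin.rev_rev, Fin.rev_rev⟩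

theorem walkOf_rev_comp (x : ℕ) : walkOf (Fin.rev ∘ f) x = n - walkOf f x := by
  simp [walkOf, Fin.val_rev]

theorem IsPrimeF.iso_comp {e : Fin (n + 1) → Fin (l + 1)} (hp : IsPrimeF f) (he : IsIsoF e) :
    IsPrimeF (e ∘ f) := by
  obtain ⟨he', e', hinv, hl, hr⟩ := id he
  have hinv_iso : IsIsoF e' := ⟨hinv, e, he', hr, hl⟩
  refine ⟨he'.comp hp.1, fun hiso => hp.2.1 ?_, fun k g h hg hh hfac => ?_⟩
  · simpa [comp_def, hl] using hinv_iso.comp hiso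
  · refine (hp.2.2 k (e' ∘ g) h (hinv.comp hg) hh fun a => ?_).imp_left fun hiso => ?_
    · simp [← hfac, hl]
    · simpa [comp_def, hr] using he.comp hiso

theorem IsEdgeInjFun.iso_comp {e : Fin (n + 1) → Fin (l + 1)} (hf : IsEdgeInjFun f)
    (he : IsIsoF e) : IsEdgeInjFun (e ∘ f) :=
  ⟨he.1.1.comp hf.1, fun a b hab => he.1.2 _ _ (hf.2.1 a b hab),
    fun a b hab => he.injective.ne (hf.2.2 a b hab)⟩

theorem turningNumber_comp_of_injective {e : Fin (n + 1) → Fin (l + 1)} (he : Injective e) :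
    turningNumber (e ∘ f) = turningNumber f := by
  simp only [turningNumber, comp_apply, he.eq_iff]

end Morphisms

section Primes

variable {m n : ℕ} {f : Fin (m + 1) → Fin (n + 1)}

theorem IsPrimeF.eq_of_comp (hp : IsPrimeF f) {k : ℕ} {g : Fin (k + 1) → Fin (n + 1)}
    {h : Fin (m + 1) → Fin (k + 1)} (hg : IsMorF g) (hh : IsMorF h) (hfac : ∀ a, f a = g (h a))
    (hh_inj : ¬Injective h) : k = n :=
  ((hp.2.2 k g h hg hh hfac).resolve_right fun hiso => hh_inj hiso.injective).card_eq

theorem IsPrimeF.eq_of_walk_factor (hp : IsPrimeF f) {k : ℕ} {G H : ℕ → ℕ}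
    (hG : IsWalk G) (hH : IsWalk H) (hHk : ∀ x ≤ m, H x ≤ k)
    (hH_onto : ∀ j ≤ k, ∃ x ≤ m, H x = j) (hfac : ∀ x ≤ m, G (H x) = walkOf f x)
    {x y : ℕ} (hx : x ≤ m) (hy : y ≤ m) (hxy : x ≠ y) (hHxy : H x = H y) : k = n := by
  have hG_onto : ∀ j ≤ n, ∃ y ≤ k, G y = j := by
    intro j hj
    obtain ⟨x, hx, rfl⟩ := hp.1.exists_walkOf_eq hj
    exact ⟨H x, hHk x hx, hfac x hx⟩
  refine hp.eq_of_comp (isMorF_ofWalk hG hG_onto) (isMorF_ofWalk hH hH_onto) (fun a => ?_) ?_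
  · ext
    simp [ofWalk, hHk a a.is_le, hfac a a.is_le, walkOf_val, (f a).is_le]
  · intro hinj
    have := @hinj ⟨x, by omega⟩ ⟨y, by omega⟩ (Fin.ext (by simp [ofWalk, hHxy]))
    exact hxy (congrArg Fin.val this)

theorem IsPrimeF.eq_succ_of_apply_eq (hp : IsPrimeF f) {a b : Fin (m + 1)}
    (hab : (a : ℕ) + 1 = b) (heq : f a = f b) : m = n + 1 := by
  have hu : IsWalk (walkOf f) := hp.1.isWalk
  have hcol : walkOf f a = walkOf f (a + 1) := by rw [hab, walkOf_val, walkOf_val, heq]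
  have ham : (a : ℕ) < m := by have := b.is_le; omega
  suffices m - 1 = n by omega
  -- `H` contracts the edge `[a, a + 1]`.
  refine hp.eq_of_walk_factor (G := fun y => if y ≤ a then walkOf f y else walkOf f (y + 1))
    (H := fun x => if x ≤ a then x else x - 1) (x := a) (y := a + 1)
    (hu.ite_le (fun y => hu (y + 1)) hcol) (fun x => by beta_reduce; split_ifs <;> omega)
    (fun x hx => by split_ifs <;> omega) (fun j hj => ?_) (fun x hx => ?_)
    ham.le (by omega) (by omega) (by simp)
  · by_cases h : j ≤ a
    · exact ⟨j, by omega, if_pos h⟩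
    · exact ⟨j + 1, by omega, by simp; omega⟩
  · rcases lt_trichotomy x (a + 1) with h | rfl | h
    · simp [show x ≤ a by omega]
    · simp [hcol]
    · obtain ⟨x, rfl⟩ : ∃ x', x = x' + 1 := ⟨x - 1, by omega⟩
      simp [show ¬x + 1 ≤ a by omega, show ¬x ≤ a by omega]

theorem IsEdgeInjFun.isMorF (hf : IsEdgeInjFun f) : IsMorF f := ⟨hf.1, hf.2.1⟩

theorem IsEdgeInjFun.walkOf_succ_ne (hf : IsEdgeInjFun f) {x : ℕ} (hx : x < m) :
    walkOf f (x + 1) ≠ walkOf f x := by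
  intro h
  apply hf.2.2 ⟨x, by omega⟩ ⟨x + 1, by omega⟩ rfl
  apply Fin.ext
  rw [← walkOf_val, ← walkOf_val]
  exact h.symm

theorem IsEdgeInjFun.ne_zero_of_turningNumber_ne_zero (hf : IsEdgeInjFun f)
    (ht : turningNumber f ≠ 0) : n ≠ 0 := by
  obtain ⟨p, hp⟩ := Set.nonempty_of_ncard_ne_zero (s := turnSet f) ht
  have := (mem_turnSet_iff.1 hp).2.1
  have := hf.walkOf_succ_ne (x := 0) (by omega)
  have := walkOf_le (f := f) 0; have := walkOf_le (f := f) (0 + 1)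
  omega

theorem isIsoF_of_walkOf_succ (hf : IsMorF f)
    (hup : ∀ x < m, walkOf f (x + 1) = walkOf f x + 1) : IsIsoF f := by
  have hval : ∀ x ≤ m, walkOf f x = walkOf f 0 + x := by
    intro x hx
    induction x with
    | zero => rfl
    | succ x ih => have := hup x (by omega); have := ih (by omega); omega
  obtain ⟨z, hz, hz0⟩ := hf.exists_walkOf_eq (Nat.zero_le n)
  obtain ⟨w, hw, hwn⟩ := hf.exists_walkOf_eq le_rfl
  have := hval z hz; have := hval w hw; have := hval m le_rfl; have := walkOf_le (f := f) m
  obtain rfl : m = n := by omega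
  obtain rfl : f = id := funext fun a => Fin.ext <| by
    have := hval a a.is_le
    rw [walkOf_val] at this
    simp only [id]
    omega
  exact ⟨hf, id, hf, fun _ => rfl, fun _ => rfl⟩

theorem IsEdgeInjFun.isIsoF_of_turningNumber_eq_zero (hf : IsEdgeInjFun f)
    (ht : turningNumber f = 0) : IsIsoF f := by
  have hturn : ∀ p, ¬IsTurn m (walkOf f) p := by
    intro p hp
    have hempty : turnSet f = ∅ := (Set.ncard_eq_zero (Set.toFinite _)).1 ht
    have : (⟨p, by have := hp.2.1; omega⟩ : Fin (m + 1)) ∈ turnSet f := mem_turnSet_iff.2 hp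
    simp [hempty] at this
  rcases hf.isMorF.isWalk.forall_up_or_forall_down (fun x hx => hf.walkOf_succ_ne hx) hturn
    with hup | hdown
  · exact isIsoF_of_walkOf_succ hf.isMorF hup
  · have hrev := isIsoF_of_walkOf_succ (hf.iso_comp isIsoF_rev).isMorF fun x hx => by
      rw [walkOf_rev_comp, walkOf_rev_comp]
      have := hdown x hx; have := walkOf_le (f := f) x
      omega
    simpa [comp_def] using isIsoF_rev.comp hrev

theorem IsPrimeF.isTurn_eq_of_walkOf_eq_top (hp : IsPrimeF f)
    (hne : ∀ x < m, walkOf f (x + 1) ≠ walkOf f x) {s p : ℕ} (hs0 : 0 < s) (hsm : s < m)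
    (hs : walkOf f s = n) (hturn : IsTurn m (walkOf f) p) : p = s := by
  by_contra hps
  obtain ⟨z, hz, hz0⟩ := hp.1.exists_walkOf_eq (Nat.zero_le n)
  set u := walkOf f
  have hu : IsWalk u := hp.1.isWalk
  have hun : ∀ x, u x ≤ n := walkOf_le
  obtain ⟨xc, hxc, hc⟩ := (Finset.Icc 0 s).exists_min_image u ⟨0, by simp⟩
  obtain ⟨xd, hxd, hd⟩ := (Finset.Icc s m).exists_min_image u ⟨s, by simp; omega⟩
  simp only [Finset.mem_Icc] at hxc hxd hc hd
  have hc_lt : u xc < n := by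
    obtain ⟨s, rfl⟩ : ∃ s', s = s' + 1 := ⟨s - 1, by omega⟩
    have := hc s ⟨by omega, by omega⟩; have := hu s; have := hne s (by omega); have := hun s
    omega
  have hd_lt : u xd < n := by
    have := hd (s + 1) ⟨by omega, by omega⟩; have := hu s; have := hne s hsm
    have := hun (s + 1)
    omega
  -- Both sides of `s` go below `n` and one reaches `0`, so the lift below is longer than `n`.
  have hcd : u xc = 0 ∨ u xd = 0 := by
    have := hc z; have := hd z
    omega
  -- Reflect the walk after `s` about `n`, shifted down by its minimum before `s`.
  have hH : IsWalk fun x => if x ≤ s then u x - u xc else 2 * n - u xc - u x :=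
    (hu.sub_const _).ite_le (hu.const_sub _) (by omega)
  suffices 2 * n - u xc - u xd = n by omega
  obtain ⟨q, rfl⟩ : ∃ q, p = q + 1 := ⟨p - 1, by have := hturn.1; omega⟩
  obtain ⟨-, hqm, hq⟩ := hturn
  simp only [Nat.add_sub_cancel] at hq
  refine hp.eq_of_walk_factor
    (G := fun y => if y ≤ n - u xc then y + u xc else 2 * n - u xc - y) (x := q) (y := q + 1 + 1)
    (fun y => by beta_reduce; split_ifs <;> omega) hH
    (fun x hx => by have := hd x; have := hun x; split_ifs <;> omega)
    (fun j hj => ?_) (fun x hx => ?_) (by omega) hqm (by omega) ?_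
  · obtain ⟨x, hx, hxj⟩ := hH.exists_eq_of_eq_zero (a := xc) (b := xd) (by simp [hxc.2])
      (by rcases hxd.1.eq_or_lt with rfl | h <;> simp <;> omega) hj
    exact ⟨x, hx.trans (by omega), hxj⟩
  · have := hc x; have := hd x; have := hun x
    show _ = u x
    split_ifs <;> omega
  · -- `q + 1 ≠ s`, so `q` and `q + 2` lie in the same piece of `H`.
    rcases eq_or_ne q s with rfl | hqs <;> split_ifs <;> omega

theorem IsPrimeF.eq_zero_or_eq_last_of_apply_eq_last (hp : IsPrimeF f) (hf : IsEdgeInjFun f)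
    (ht : 2 ≤ turningNumber f) {s : Fin (m + 1)} (hs : f s = Fin.last n) :
    s = 0 ∨ s = Fin.last m := by
  by_contra hs'
  simp only [Fin.ext_iff, Fin.val_zero, Fin.val_last, not_or] at hs'
  obtain ⟨p, hp_mem, hps⟩ := Set.exists_ne_of_one_lt_ncard ht s
  refine hps (Fin.ext (hp.isTurn_eq_of_walkOf_eq_top (fun x hx => hf.walkOf_succ_ne hx)
    (by omega) (by have := s.is_le; omega) (by rw [walkOf_val, hs, Fin.val_last])
    (mem_turnSet_iff.1 hp_mem)))

theorem IsPrimeF.eq_zero_or_eq_last_of_apply_eq_zero (hp : IsPrimeF f) (hf : IsEdgeInjFun f)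
    (ht : 2 ≤ turningNumber f) {s : Fin (m + 1)} (hs : f s = 0) : s = 0 ∨ s = Fin.last m :=
  (hp.iso_comp isIsoF_rev).eq_zero_or_eq_last_of_apply_eq_last (hf.iso_comp isIsoF_rev)
    (by rwa [turningNumber_comp_of_injective Fin.rev_injective]) (by simp [hs])

theorem IsPrimeF.isTurn_eq_of_peak_valley (hp : IsPrimeF f) (h0 : walkOf f 0 = 0)
    (hm : walkOf f m = n) {xa xb : ℕ} (hab : xa < xb) (hbm : xb ≤ m)
    (hA : ∀ x ≤ xb, walkOf f x ≤ walkOf f xa)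
    (hB : ∀ x, xa ≤ x → x ≤ m → walkOf f xb ≤ walkOf f x)
    (hBA : walkOf f xb < walkOf f xa)
    {p : ℕ} (hturn : IsTurn m (walkOf f) p) : p = xa ∨ p = xb := by
  by_contra hp'
  set u := walkOf f
  have hu : IsWalk u := hp.1.isWalk
  have hun : ∀ x, u x ≤ n := walkOf_le
  have hbm' : xb < m := by
    rcases hbm.lt_or_eq with h | rfl
    · exact h
    · have := hun xa; omega
  -- Lift through the Z-shaped map up to `u xa`, down to `u xb`, then up again.
  have hH : IsWalk fun x => if x ≤ xa then u x
      else if x ≤ xb then 2 * u xa - u x else u x + 2 * (u xa - u xb) :=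
    hu.ite_le ((hu.const_sub _).ite_le (hu.add_const _) (by omega)) (by simp [hab.le]; omega)
  suffices n + 2 * (u xa - u xb) = n by omega
  obtain ⟨q, rfl⟩ : ∃ q, p = q + 1 := ⟨p - 1, by have := hturn.1; omega⟩
  obtain ⟨-, hqm, hq⟩ := hturn
  simp only [Nat.add_sub_cancel] at hq
  refine hp.eq_of_walk_factor (G := fun y => if y ≤ u xa then y
      else if y ≤ 2 * u xa - u xb then 2 * u xa - y else y - 2 * (u xa - u xb))
    (x := q) (y := q + 1 + 1) (fun y => by beta_reduce; split_ifs <;> omega) hH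
    (fun x hx => by have := hun x; have := hA x; have := hB x; split_ifs <;> omega)
    (fun j hj => ?_) (fun x hx => ?_) (by omega) hqm (by omega) ?_
  · obtain ⟨x, hx, hxj⟩ := hH.exists_eq_of_eq_zero (a := 0) (b := m) (by simp [h0])
      (by simp [show ¬m ≤ xa by omega, show ¬m ≤ xb by omega, hm]) hj
    exact ⟨x, by omega, hxj⟩
  · have := hA x; have := hB x
    show _ = u x
    split_ifs <;> omega
  · -- `q + 1 ∉ {xa, xb}`, so `q` and `q + 2` lie in the same piece of `H`.
    rcases eq_or_ne q xa with rfl | hqa <;> rcases eq_or_ne q xb with rfl | hqb <;>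
      split_ifs <;> omega

theorem IsPrimeF.turningNumber_le_two (hp : IsPrimeF f) (hf : IsEdgeInjFun f) (h0 : f 0 = 0)
    (hm : f (Fin.last m) = Fin.last n) : turningNumber f ≤ 2 := by
  by_cases hdesc : ∃ x < m, walkOf f (x + 1) < walkOf f x
  · obtain ⟨xa, xb, hab, hbm, hA, hB, hBA⟩ := exists_peak_valley hdesc
    have hsub : turnSet f ⊆ {⟨xa, by omega⟩, ⟨xb, by omega⟩} := by
      intro p hp_mem
      rcases hp.isTurn_eq_of_peak_valley (by simpa [h0] using walkOf_val (f := f) 0)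
        (by simpa [hm] using walkOf_val (f := f) (Fin.last m)) hab hbm hA hB hBA
        (mem_turnSet_iff.1 hp_mem) with h | h
      · exact Or.inl (Fin.ext h)
      · exact Or.inr (Fin.ext h)
    exact (Set.ncard_le_ncard hsub).trans ((Set.ncard_insert_le _ _).trans (by simp))
  · have hempty : turnSet f = ∅ := Set.eq_empty_of_forall_notMem fun p hp_mem => by
      obtain ⟨hp0, hpm, hturn⟩ := mem_turnSet_iff.1 hp_mem
      obtain ⟨q, hq⟩ : ∃ q, (p : ℕ) = q + 1 := ⟨p - 1, by omega⟩
      rw [hq] at hturn hpm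
      simp only [not_exists, not_and, not_lt, Nat.add_sub_cancel] at hdesc hturn
      have := hdesc q (by omega); have := hdesc (q + 1) hpm
      have := hf.walkOf_succ_ne (x := q) (by omega)
      omega
    show (turnSet f).ncard ≤ 2
    simp [hempty]

theorem IsMorF.endpoints_of_extremes (hf : IsMorF f) (hn : n ≠ 0)
    (hbot : ∀ a, f a = 0 → a = 0 ∨ a = Fin.last m)
    (htop : ∀ a, f a = Fin.last n → a = 0 ∨ a = Fin.last m) :
    (f 0 = 0 ∧ f (Fin.last m) = Fin.last n) ∨ (f 0 = Fin.last n ∧ f (Fin.last m) = 0) := by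
  obtain ⟨a, ha⟩ := hf.1 0
  obtain ⟨b, hb⟩ := hf.1 (Fin.last n)
  have hab : a ≠ b := by
    rintro rfl
    exact hn (by simpa [eq_comm] using congrArg Fin.val (ha.symm.trans hb))
  rcases hbot a ha with rfl | rfl <;> rcases htop b hb with rfl | rfl
  · exact absurd rfl hab
  · exact Or.inl ⟨ha, hb⟩
  · exact Or.inr ⟨hb, ha⟩
  · exact absurd rfl hab

theorem properFun_of_extremes (hn : n ≠ 0) (hbot : ∀ a, f a = 0 → a = 0 ∨ a = Fin.last m)
    (htop : ∀ a, f a = Fin.last n → a = 0 ∨ a = Fin.last m) : ProperFun f := by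
  intro a b hab hsurj
  obtain ⟨k₀, hak₀, hk₀b, hk₀⟩ := hsurj 0
  obtain ⟨k₁, hak₁, hk₁b, hk₁⟩ := hsurj (Fin.last n)
  have hk : k₀ ≠ k₁ := by
    rintro rfl
    exact hn (by simpa [eq_comm] using congrArg Fin.val (hk₀.symm.trans hk₁))
  have h₀ := hbot k₀ hk₀
  have h₁ := htop k₁ hk₁
  rw [Ne, Fin.ext_iff] at hk
  simp only [Fin.ext_iff, Fin.val_zero, Fin.val_last] at h₀ h₁
  simp only [Fin.le_iff_val_le_val] at hak₀ hk₀b hak₁ hk₁b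
  omega

end Primes

end PathCat

open PathCat in
/-- Every prime in the category `F` of edge-preserving surjective functions between
paths is simple, a hook, or a proper snake. -/
theorem stmt18 {m n : ℕ} (f : Fin (m + 1) → Fin (n + 1)) (hp : IsPrimeF f) :
    m = n + 1 ∨ (IsEdgeInjFun f ∧ turningNumber f = 1) ∨
      (IsEdgeInjFun f ∧ turningNumber f = 2 ∧ ProperFun f) := by
  by_cases hf : IsEdgeInjFun f
  swap
  · obtain ⟨a, b, hab, heq⟩ : ∃ a b : Fin (m + 1), (a : ℕ) + 1 = b ∧ f a = f b := by
      by_contra h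
      exact hf ⟨hp.1.1, hp.1.2, fun a b hab heq => h ⟨a, b, hab, heq⟩⟩
    exact Or.inl (hp.eq_succ_of_apply_eq hab heq)
  right
  have ht0 : turningNumber f ≠ 0 := fun h => hp.2.1 (hf.isIsoF_of_turningNumber_eq_zero h)
  obtain ht1 | ht2 : turningNumber f = 1 ∨ 2 ≤ turningNumber f := by omega
  · exact Or.inl ⟨hf, ht1⟩
  have hn := hf.ne_zero_of_turningNumber_ne_zero ht0
  have hbot := fun a => hp.eq_zero_or_eq_last_of_apply_eq_zero hf ht2 (s := a)
  have htop := fun a => hp.eq_zero_or_eq_last_of_apply_eq_last hf ht2 (s := a)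
  refine Or.inr ⟨hf, le_antisymm ?_ ht2, properFun_of_extremes hn hbot htop⟩
  rcases hp.1.endpoints_of_extremes hn hbot htop with ⟨h0, hm⟩ | ⟨h0, hm⟩
  · exact hp.turningNumber_le_two hf h0 hm
  · rw [← turningNumber_comp_of_injective Fin.rev_injective]
    exact (hp.iso_comp isIsoF_rev).turningNumber_le_two (hf.iso_comp isIsoF_rev)
      (by simp [h0]) (by simp [hm])
end
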